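/- There exist absolute constants x₀ and such that for all real numbers y, x with 2 ≤ y ≤ x and x ≥ x₀, the probability that θ_p ≤ (log x)^{−2} holds simultaneously for all primes p ≤ y is at least exp(−10 · y · log log x / log y). -/

import Mathlib

/-!
Independence turns the probability into `F(δ) ^ π(y)`, where `δ = (log x)⁻²` and
`F(δ) = μ_st [0, δ] ≥ (δ/π)³` because `sin t ≥ 2t/π`; hence it is at least
`exp (-π(y) (6 log log x + 5))`. The Chebyshev-type bound `π(y) log y ≤ 1.66 y` then suffices,
since `6 · 1.66 < 10`. That bound is proved by induction from `n / 2` to `n`: the primes in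
`(m + 1, 2m + 1]` divide `C(2m + 1, m) ≤ 4 ^ m`, and the induction closes once `log (n / 2) ≥ 8`;
the finitely many `n ≤ 5960` below that are checked by a kernel computation.
-/

open MeasureTheory ProbabilityTheory

/-- The Sato–Tate measure `dμ_st(t) = (2/π) sin²(t) dt` on `[0, π]`. -/
noncomputable def satoTate : Measure ℝ :=
  (volume.restrict (Set.Icc 0 Real.pi)).withDensity
    fun t => ENNReal.ofReal (2 / Real.pi * Real.sin t ^ 2)

open Real Finset

-- `Nat.blt` and `Nat.beq` instead of `decide` keep the kernel evaluation below fast.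
def noDivisorFrom (n : ℕ) : ℕ → ℕ → Bool
  | 0, _ => true
  | fuel + 1, d => Nat.blt n (d * d) || (!Nat.beq (n % d) 0 && noDivisorFrom n fuel (d + 1))

-- Only `trialPrime_of_prime` is needed for soundness; that composites below `82²` are rejected
-- matters only for the computation in `primeCounting_mul_log2_le_of_le_5960` to succeed.
def trialPrime (n : ℕ) : Bool := Nat.ble 2 n && noDivisorFrom n 80 2

lemma noDivisorFrom_of_prime {p : ℕ} (hp : p.Prime) (fuel : ℕ) {d : ℕ} (hd : 2 ≤ d) :
    noDivisorFrom p fuel d = true := by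
  induction fuel generalizing d with
  | zero => rfl
  | succ fuel ih =>
    rw [noDivisorFrom, Bool.or_eq_true, Bool.and_eq_true, Bool.not_eq_true', Nat.blt_eq,
      Bool.eq_false_iff, ne_eq, Nat.beq_eq]
    by_cases hdvd : d ∣ p
    · obtain rfl : d = p := (hp.eq_one_or_self_of_dvd d hdvd).resolve_left (by omega)
      left
      nlinarith
    · right
      exact ⟨by simpa [Nat.dvd_iff_mod_eq_zero] using hdvd, ih (by omega)⟩

lemma trialPrime_of_prime {p : ℕ} (hp : p.Prime) : trialPrime p = true := by
  simp [trialPrime, hp.two_le, noDivisorFrom_of_prime hp]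

lemma count_trialPrime_succ (n : ℕ) :
    Nat.count (trialPrime · = true) (n + 1) =
      Nat.count (trialPrime · = true) n + (trialPrime n).toNat := by
  rw [Nat.count_succ]
  cases trialPrime n <;> rfl

/-- Started with `c` the number of `k < n` passing `trialPrime`, this checks
`c(k) · (log₂ k + 1) · 0.6932 ≤ 1.66 k` for `k = n, …, n + fuel - 1`, where `c(k)` counts the
`j ≤ k` passing `trialPrime`. -/
def chebyshevScan : ℕ → ℕ → ℕ → Bool
  | 0, _, _ => true
  | fuel + 1, n, c =>
      let c' := c + (trialPrime n).toNat
      Nat.ble (c' * (Nat.log2 n + 1) * 6932) (16600 * n) && chebyshevScan fuel (n + 1) c'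

lemma le_of_chebyshevScan {fuel n : ℕ}
    (h : chebyshevScan fuel n (Nat.count (trialPrime · = true) n) = true) {k : ℕ}
    (hnk : n ≤ k) (hk : k < n + fuel) :
    Nat.count (trialPrime · = true) (k + 1) * (Nat.log2 k + 1) * 6932 ≤ 16600 * k := by
  induction fuel generalizing n with
  | zero => omega
  | succ fuel ih =>
    rw [chebyshevScan, ← count_trialPrime_succ, Bool.and_eq_true, Nat.ble_eq] at h
    rcases hnk.eq_or_lt with rfl | hlt
    · exact h.1
    · exact ih h.2 hlt (by omega)

lemma primeCounting_mul_log2_le_of_le_5960 {n : ℕ} (h2 : 2 ≤ n) (h : n ≤ 5960) :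
    Nat.primeCounting n * (Nat.log2 n + 1) * 6932 ≤ 16600 * n := by
  have hscan : chebyshevScan 5959 2 (Nat.count (trialPrime · = true) 2) = true := by
    decide +kernel
  refine le_trans ?_ (le_of_chebyshevScan hscan h2 (by omega))
  gcongr
  exact Nat.count_mono_left fun k _ hk => trialPrime_of_prime hk

lemma primeCounting_mul_log_succ_le_of_mul_log2_le {n : ℕ}
    (h : Nat.primeCounting n * (Nat.log2 n + 1) * 6932 ≤ 16600 * n) :
    Nat.primeCounting n * log (n + 1) ≤ 1.66 * n := by
  have hlog : log (n + 1) ≤ (Nat.log2 n + 1) * 0.6932 := by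
    have hpow : (n + 1 : ℝ) ≤ 2 ^ (Nat.log2 n + 1) := by exact_mod_cast Nat.lt_log2_self
    calc log (n + 1) ≤ log (2 ^ (Nat.log2 n + 1)) := log_le_log (by positivity) hpow
      _ = (Nat.log2 n + 1) * log 2 := by rw [log_pow]; push_cast; ring
      _ ≤ (Nat.log2 n + 1) * 0.6932 := by
        gcongr
        exact (log_two_lt_d9.trans (by norm_num)).le
  have hR : (Nat.primeCounting n : ℝ) * (Nat.log2 n + 1) * 6932 ≤ 16600 * n := by
    exact_mod_cast h
  calc (Nat.primeCounting n : ℝ) * log (n + 1)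
      ≤ Nat.primeCounting n * ((Nat.log2 n + 1) * 0.6932) := by gcongr
    _ ≤ 1.66 * n := by linarith

lemma prod_primes_Ico_le_four_pow (m : ℕ) :
    ∏ p ∈ Ico (m + 2) (2 * m + 2) with p.Prime, p ≤ 4 ^ m := by
  refine (Nat.le_of_dvd (Nat.choose_pos (by omega)) (prod_primes_dvd _ ?_ ?_)).trans
    (Nat.choose_middle_le_pow m)
  · exact fun p hp => (mem_filter.1 hp).2.prime
  · intro p hp
    rw [mem_filter, mem_Ico] at hp
    exact hp.2.dvd_choose (by omega) (by omega) (by omega)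

lemma card_primes_Ico_mul_log_le (m : ℕ) :
    #{p ∈ Ico (m + 2) (2 * m + 2) | p.Prime} * log (m + 2) ≤ m * log 4 := by
  have hpow : (m + 2) ^ #{p ∈ Ico (m + 2) (2 * m + 2) | p.Prime} ≤ 4 ^ m :=
    (pow_card_le_prod _ _ _ fun p hp => (mem_Ico.1 (mem_filter.1 hp).1).1).trans
      (prod_primes_Ico_le_four_pow m)
  have := log_le_log (by positivity) (show ((m + 2 : ℕ) : ℝ) ^ _ ≤ ((4 ^ m : ℕ) : ℝ) by
    exact_mod_cast hpow)
  simpa [log_pow] using this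

lemma primeCounting_two_mul_add_one_le (m : ℕ) :
    Nat.primeCounting (2 * m + 1) ≤
      Nat.primeCounting (m + 1) + #{p ∈ Ico (m + 2) (2 * m + 2) | p.Prime} := by
  rw [← Nat.primesLE_card_eq_primeCounting, ← Nat.primesLE_card_eq_primeCounting]
  refine (card_le_card fun p hp => ?_).trans (card_union_le _ _)
  rw [Nat.mem_primesLE] at hp
  rw [mem_union, Nat.mem_primesLE, mem_filter, mem_Ico]
  by_cases hpm : p ≤ m + 1
  · exact Or.inl ⟨hpm, hp.2⟩
  · exact Or.inr ⟨by omega, hp.2⟩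

lemma chebyshev_step {P T m l : ℝ} (hm : 2980 ≤ m) (hl : 8 ≤ l)
    (hP : P * l ≤ 1.66 * (m + 1)) (hT : T * l ≤ m * log 4) :
    (P + T) * (log 2 + l) ≤ 1.66 * (2 * m) := by
  have ha0 : 0 < log 2 := log_pos one_lt_two
  have ha : log 2 < 0.6932 := log_two_lt_d9.trans (by norm_num)
  have h4 : log 4 = 2 * log 2 := by
    rw [show (4 : ℝ) = 2 ^ 2 by norm_num, log_pow]; push_cast; ring
  have hsum : (P + T) * l ≤ 1.66 * (m + 1) + 2 * log 2 * m := by rw [h4] at hT; linarith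
  refine le_of_mul_le_mul_right ?_ (by linarith : (0 : ℝ) < l)
  calc (P + T) * (log 2 + l) * l = (P + T) * l * (log 2 + l) := by ring
    _ ≤ (1.66 * (m + 1) + 2 * log 2 * m) * (log 2 + l) := by gcongr
    _ ≤ 1.66 * (2 * m) * l := by
      nlinarith [mul_nonneg (sub_nonneg.2 hl) (sub_nonneg.2 hm),
        mul_nonneg (sub_nonneg.2 ha.le) (mul_nonneg (by linarith : (0 : ℝ) ≤ m)
          (by linarith : (0 : ℝ) ≤ l)),
        mul_nonneg (sub_nonneg.2 ha.le) (by linarith : (0 : ℝ) ≤ m)]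

lemma exp_eight_lt : exp 8 < 2981 := by
  have h : exp 8 = exp 1 ^ 8 := by rw [← exp_nat_mul]; norm_num
  rw [h]
  calc exp 1 ^ 8 < 2.7182818286 ^ 8 := by gcongr; exact exp_one_lt_d9
    _ < 2981 := by norm_num

theorem primeCounting_mul_log_succ_le {n : ℕ} (hn : 2 ≤ n) :
    Nat.primeCounting n * log (n + 1) ≤ 1.66 * n := by
  induction n using Nat.strong_induction_on with
  | _ n ih =>
  rcases le_or_gt n 5960 with hbase | hlarge
  · exact primeCounting_mul_log_succ_le_of_mul_log2_le
      (primeCounting_mul_log2_le_of_le_5960 hn hbase)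
  set m := n / 2
  have hm : (2980 : ℝ) ≤ m := by norm_cast; omega
  have hl : 8 ≤ log (m + 2) := by
    rw [le_log_iff_exp_le (by positivity)]
    linarith [exp_eight_lt]
  have hP : Nat.primeCounting (m + 1) * log (m + 2) ≤ 1.66 * (m + 1) := by
    have := ih (m + 1) (by omega) (by omega)
    push_cast at this
    rwa [add_assoc, one_add_one_eq_two] at this
  have hstep := chebyshev_step hm hl hP (card_primes_Ico_mul_log_le m)
  have hcount : (Nat.primeCounting n : ℝ) ≤
      Nat.primeCounting (m + 1) + #{p ∈ Ico (m + 2) (2 * m + 2) | p.Prime} := by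
    exact_mod_cast (Nat.monotone_primeCounting (by omega : n ≤ 2 * m + 1)).trans
      (primeCounting_two_mul_add_one_le m)
  have hlog : log (n + 1) ≤ log 2 + log (m + 2) := by
    rw [← log_mul two_ne_zero (by positivity)]
    exact log_le_log (by positivity) (by norm_cast; omega)
  have hn2m : (2 * m : ℝ) ≤ n := by norm_cast; omega
  calc (Nat.primeCounting n : ℝ) * log (n + 1)
      ≤ (Nat.primeCounting (m + 1) + #{p ∈ Ico (m + 2) (2 * m + 2) | p.Prime}) *
          (log 2 + log (m + 2)) := by
        gcongr
        exact log_nonneg (by linarith)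
    _ ≤ 1.66 * n := by linarith

theorem primeCounting_floor_mul_log_le {y : ℝ} (hy : 2 ≤ y) :
    Nat.primeCounting ⌊y⌋₊ * log y ≤ 1.66 * y := by
  have hfloor : 2 ≤ ⌊y⌋₊ := Nat.le_floor (by exact_mod_cast hy)
  calc (Nat.primeCounting ⌊y⌋₊ : ℝ) * log y
      ≤ Nat.primeCounting ⌊y⌋₊ * log (⌊y⌋₊ + 1) := by
        gcongr
        exact (Nat.lt_floor_add_one y).le
    _ ≤ 1.66 * ⌊y⌋₊ := primeCounting_mul_log_succ_le hfloor
    _ ≤ 1.66 * y := by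
        gcongr
        exact Nat.floor_le (by linarith)

lemma ofReal_div_pi_pow_three_le_satoTate_Iic {δ : ℝ} (hδ0 : 0 ≤ δ) (hδ : δ ≤ π / 2) :
    ENNReal.ofReal ((δ / π) ^ 3) ≤ satoTate (Set.Iic δ) := by
  rw [satoTate, withDensity_apply _ measurableSet_Iic,
    Measure.restrict_restrict measurableSet_Iic]
  have hsub : Set.Icc (δ / 2) δ ⊆ Set.Iic δ ∩ Set.Icc 0 π := fun t ht =>
    ⟨ht.2, by linarith [ht.1], by linarith [ht.2, pi_pos]⟩
  have hdensity : ∀ t ∈ Set.Icc (δ / 2) δ,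
      ENNReal.ofReal (2 * δ ^ 2 / π ^ 3) ≤ ENNReal.ofReal (2 / π * sin t ^ 2) := by
    rintro t ⟨ht1, ht2⟩
    have hsin : δ / π ≤ sin t :=
      calc δ / π = 2 / π * (δ / 2) := by ring
        _ ≤ 2 / π * t := by gcongr
        _ ≤ sin t := mul_le_sin (by linarith) (by linarith)
    apply ENNReal.ofReal_le_ofReal
    calc 2 * δ ^ 2 / π ^ 3 = 2 / π * (δ / π) ^ 2 := by ring
      _ ≤ 2 / π * sin t ^ 2 := by gcongr
  calc ENNReal.ofReal ((δ / π) ^ 3)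
      = ENNReal.ofReal (2 * δ ^ 2 / π ^ 3) * volume (Set.Icc (δ / 2) δ) := by
        rw [Real.volume_Icc, ← ENNReal.ofReal_mul (by positivity)]
        congr 1
        ring
    _ = ∫⁻ _ in Set.Icc (δ / 2) δ, ENNReal.ofReal (2 * δ ^ 2 / π ^ 3) :=
        (setLIntegral_const _ _).symm
    _ ≤ ∫⁻ t in Set.Icc (δ / 2) δ, ENNReal.ofReal (2 / π * sin t ^ 2) :=
        setLIntegral_mono (by fun_prop) hdensity
    _ ≤ ∫⁻ t in Set.Iic δ ∩ Set.Icc 0 π, ENNReal.ofReal (2 / π * sin t ^ 2) :=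
        lintegral_mono_set hsub

lemma ProbabilityTheory.iIndepFun.measure_biInter_preimage_eq_pow {Ω ι α : Type*}
    [MeasurableSpace Ω] [MeasurableSpace α] {μ : Measure Ω} {ν : Measure α} {f : ι → Ω → α}
    (hf : iIndepFun f μ) (hmeas : ∀ i, Measurable (f i)) (hmap : ∀ i, μ.map (f i) = ν)
    (S : Finset ι) {A : Set α} (hA : MeasurableSet A) :
    μ (⋂ i ∈ S, f i ⁻¹' A) = ν A ^ #S := by
  rw [hf.measure_inter_preimage_eq_mul S fun _ _ => hA, ← prod_const]
  exact prod_congr rfl fun i _ => by rw [← hmap i, Measure.map_apply (hmeas i) hA]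

lemma measure_forall_prime_le_eq_pow {Ω : Type*} [MeasurableSpace Ω] {μ : Measure Ω}
    {ν : Measure ℝ} {θ : ℕ → Ω → ℝ} (hmeas : ∀ p : ℕ, p.Prime → Measurable (θ p))
    (hmap : ∀ p : ℕ, p.Prime → μ.map (θ p) = ν)
    (hindep : iIndepFun (fun p : {p : ℕ // p.Prime} => θ p.1) μ) {y : ℝ} (hy : 0 ≤ y) (δ : ℝ) :
    μ {ω | ∀ p : ℕ, p.Prime → (p : ℝ) ≤ y → θ p ω ≤ δ} = ν (Set.Iic δ) ^ Nat.primeCounting ⌊y⌋₊ := by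
  set S : Finset {p : ℕ // p.Prime} := (Nat.primesLE ⌊y⌋₊).subtype Nat.Prime
  have hS : #S = Nat.primeCounting ⌊y⌋₊ := by
    rw [card_subtype, filter_true_of_mem fun p hp => (Nat.mem_primesLE.1 hp).2,
      Nat.primesLE_card_eq_primeCounting]
  have hevent : {ω | ∀ p : ℕ, p.Prime → (p : ℝ) ≤ y → θ p ω ≤ δ} =
      ⋂ i ∈ S, (fun p : {p : ℕ // p.Prime} => θ p.1) i ⁻¹' Set.Iic δ := by
    ext ω
    simp +contextual [S, Nat.mem_primesLE, Nat.le_floor_iff hy]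
  rw [hevent, hindep.measure_biInter_preimage_eq_pow (fun i => hmeas i.1 i.2)
    (fun i => hmap i.1 i.2) S measurableSet_Iic, hS]

lemma exp_neg_le_pow_of_mul_log_le {N : ℕ} {y L q : ℝ} (hy : 2 ≤ y)
    (hN : N * log y ≤ 1.66 * y) (hL : 210 ≤ L) (hq : exp (-(6 * L + 5)) ≤ q) :
    exp (-(10 * y * L / log y)) ≤ q ^ N := by
  have hlog : 0 < log y := log_pos (by linarith)
  have hexp : N * (6 * L + 5) ≤ 10 * y * L / log y := by
    rw [le_div_iff₀ hlog]
    nlinarith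
  calc exp (-(10 * y * L / log y)) ≤ exp (-(6 * L + 5)) ^ N := by
        rw [← exp_nat_mul]
        gcongr
        linarith
    _ ≤ q ^ N := by gcongr

lemma exp_neg_le_inv_sq_div_pi_pow_three {u : ℝ} (hu : 0 < u) :
    exp (-(6 * log u + 5)) ≤ ((u ^ 2)⁻¹ / π) ^ 3 := by
  have hπ : π ^ 3 ≤ exp 5 :=
    calc π ^ 3 ≤ 4 ^ 3 := by gcongr; exact pi_le_four
      _ ≤ 2.7182818283 ^ 5 := by norm_num
      _ ≤ exp 1 ^ 5 := by gcongr; exact exp_one_gt_d9.le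
      _ = exp 5 := by rw [← exp_nat_mul]; norm_num
  have hexp : exp (6 * log u + 5) = u ^ 6 * exp 5 := by
    rw [exp_add, show (6 : ℝ) * log u = (6 : ℕ) * log u by norm_num, exp_nat_mul, exp_log hu]
  have hrhs : ((u ^ 2)⁻¹ / π) ^ 3 = (u ^ 6 * π ^ 3)⁻¹ := by field_simp
  rw [exp_neg, hexp, hrhs]
  gcongr

theorem stmt_8 :
    ∃ x₀ : ℝ,
      ∀ {Ω : Type} [MeasurableSpace Ω] (μ : Measure Ω) [IsProbabilityMeasure μ]
        (θ : ℕ → Ω → ℝ),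
        (∀ p : ℕ, p.Prime → Measurable (θ p)) →
        (∀ p : ℕ, p.Prime → ∀ ω : Ω, θ p ω ∈ Set.Icc 0 Real.pi) →
        (∀ p : ℕ, p.Prime → Measure.map (θ p) μ = satoTate) →
        iIndepFun
          (fun p : {p : ℕ // p.Prime} => θ p.1) μ →
        ∀ x y : ℝ, 2 ≤ y → y ≤ x → x₀ ≤ x →
          ENNReal.ofReal (Real.exp (-(10 * y * Real.log (Real.log x) / Real.log y))) ≤
            μ {ω | ∀ p : ℕ, p.Prime → (p : ℝ) ≤ y → θ p ω ≤ ((Real.log x) ^ 2)⁻¹} := by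
  refine ⟨exp (exp 210), fun μ _ θ hmeas _ hmap hindep x y hy _ hx => ?_⟩
  have hlogx : exp 210 ≤ log x := (le_log_iff_exp_le ((exp_pos _).trans_le hx)).2 hx
  have hL : 210 ≤ log (log x) := (le_log_iff_exp_le ((exp_pos _).trans_le hlogx)).2 hlogx
  set δ := ((log x) ^ 2)⁻¹
  have hδ : δ ≤ π / 2 := by
    have : δ ≤ 1 := inv_le_one_of_one_le₀ (one_le_pow₀ ((one_le_exp (by norm_num)).trans hlogx))
    linarith [pi_gt_three]
  rw [measure_forall_prime_le_eq_pow hmeas hmap hindep (by linarith) δ]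
  calc ENNReal.ofReal (exp (-(10 * y * log (log x) / log y)))
      ≤ ENNReal.ofReal (((δ / π) ^ 3) ^ Nat.primeCounting ⌊y⌋₊) :=
        ENNReal.ofReal_le_ofReal <| exp_neg_le_pow_of_mul_log_le hy
          (primeCounting_floor_mul_log_le hy) hL
          (exp_neg_le_inv_sq_div_pi_pow_three ((exp_pos _).trans_le hlogx))
    _ = ENNReal.ofReal ((δ / π) ^ 3) ^ Nat.primeCounting ⌊y⌋₊ :=
        ENNReal.ofReal_pow (by positivity) _
    _ ≤ satoTate (Set.Iic δ) ^ Nat.primeCounting ⌊y⌋₊ :=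
        pow_le_pow_left' (ofReal_div_pi_pow_three_le_satoTate_Iic (by positivity) hδ) _
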